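/- Let W be a finite-dimensional real inner product space, J an orthogonal complex structure on W, and S : W → W a self-adjoint linear map with S ∘ J = J ∘ S. Let f be the characteristic polynomial of S and f′ its derivative. Then the degree of gcd(f, f′) is at least (dim W)/2. -/
import Mathlib

open Module RealInnerProductSpace Polynomial

/-- A finite-dimensional real vector space admitting an endomorphism squaring to `-id`
has even dimension. -/
lemma even_finrank_of_sq_eq_neg_one {V : Type*} [AddCommGroup V] [Module ℝ V]
    [FiniteDimensional ℝ V] (g : V →ₗ[ℝ] V) (hg : ∀ v, g (g v) = -v) :
    Even (finrank ℝ V) := by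
  have hcomp : g ∘ₗ g = (-1 : ℝ) • LinearMap.id := by
    ext v; simp [hg v]
  have hdet : LinearMap.det g * LinearMap.det g = (-1 : ℝ) ^ finrank ℝ V := by
    have h := congrArg LinearMap.det hcomp
    rwa [LinearMap.det_comp, LinearMap.det_smul, LinearMap.det_id, mul_one] at h
  rcases Nat.even_or_odd (finrank ℝ V) with h | h
  · exact h
  · exfalso
    rw [h.neg_one_pow] at hdet
    nlinarith [sq_nonneg (LinearMap.det g)]

/-- If `S` is a self-adjoint endomorphism of a finite-dimensional real inner product
space `W` commuting with an orthogonal complex structure `J`, and `f` is the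
characteristic polynomial of `S`, then `gcd (f, f')` has degree at least `dim W / 2`. -/
theorem gcd_charpoly_deriv_natDegree_ge_of_selfAdjoint_commutes
    {W : Type*} [NormedAddCommGroup W] [InnerProductSpace ℝ W] [FiniteDimensional ℝ W]
    (J : W →ₗᵢ[ℝ] W) (hJ : ∀ w, J (J w) = -w)
    (S : W →ₗ[ℝ] W)
    (hS : ∀ w w' : W, ⟪S w, w'⟫ = ⟪w, S w'⟫)
    (hSJ : ∀ w, S (J w) = J (S w)) :
    finrank ℝ W / 2 ≤
      (EuclideanDomain.gcd (LinearMap.charpoly S)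
        (derivative (LinearMap.charpoly S))).natDegree := by
  classical
  have hSym : S.IsSymmetric := hS
  set n := finrank ℝ W with hn'
  have hn : finrank ℝ W = n := rfl
  set b := hSym.eigenvectorBasis hn with hb
  set μ : Fin n → ℝ := hSym.eigenvalues hn with hμ
  have happly : ∀ i, S (b i) = μ i • b i := fun i => by
    exact_mod_cast hSym.apply_eigenvectorBasis hn i
  -- the matrix of `S` in the eigenbasis is diagonal
  have hmat : LinearMap.toMatrix b.toBasis b.toBasis S = Matrix.diagonal μ := by
    ext i j
    rw [LinearMap.toMatrix_apply, OrthonormalBasis.coe_toBasis, happly j, map_smul,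
      ← OrthonormalBasis.coe_toBasis, Basis.repr_self]
    by_cases h : i = j
    · subst h; simp
    · simp [Finsupp.single_apply, Matrix.diagonal_apply_ne _ h, Ne.symm h]
  set M : Multiset ℝ := (Finset.univ.val : Multiset (Fin n)).map μ with hM
  -- the characteristic polynomial is the product of linear factors over `M`
  have hchar : S.charpoly = (M.map (fun r => X - C r)).prod := by
    rw [← S.charpoly_toMatrix b.toBasis, hmat]
    have hcm : Matrix.charmatrix (Matrix.diagonal μ) =
        Matrix.diagonal (fun i => (X : ℝ[X]) - C (μ i)) := by
      ext i j : 2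
      by_cases h : i = j
      · subst h; simp
      · rw [Matrix.charmatrix_apply_ne _ _ _ h, Matrix.diagonal_apply_ne _ h,
          Matrix.diagonal_apply_ne _ h, map_zero, neg_zero]
    rw [Matrix.charpoly, hcm, Matrix.det_diagonal, hM, Multiset.map_map]
    rfl
  -- each eigenvalue occurs an even number of times
  have hcount : ∀ r : ℝ, Even (M.count r) := by
    intro r
    set s : Finset (Fin n) := Finset.univ.filter (fun i => μ i = r) with hs
    have hMc : M.count r = s.card := by
      rw [hM, Multiset.count_map, hs]
      simp only [Finset.card, Finset.filter_val]
      congr 1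
      exact Multiset.filter_congr (fun i _ => eq_comm)
    rw [hMc]
    -- the eigenspace for `r` is the span of the eigenbasis vectors with eigenvalue `r`
    set E := Module.End.eigenspace (S : Module.End ℝ W) r with hE
    have hbmem : ∀ i ∈ s, b i ∈ E := by
      intro i hi
      rw [hs, Finset.mem_filter] at hi
      rw [hE, Module.End.mem_eigenspace_iff]
      show S (b i) = r • b i
      rw [happly i, hi.2]
    have hspan : E = Submodule.span ℝ (Set.range (fun i : s => b i)) := by
      apply le_antisymm
      · intro v hv
        have hv' : S v = r • v := by
          rw [hE, Module.End.mem_eigenspace_iff] at hv; exact hv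
        have hexp : ∑ i, ⟪b i, v⟫ • b i = v := b.sum_repr' v
        have hzero : ∀ i ∉ s, ⟪b i, v⟫ • b i = 0 := by
          intro i hi
          rw [hs, Finset.mem_filter] at hi
          have hine : μ i ≠ r := fun h => hi ⟨Finset.mem_univ i, h⟩
          have : μ i * ⟪b i, v⟫ = r * ⟪b i, v⟫ := by
            have h1 : ⟪S (b i), v⟫ = ⟪b i, S v⟫ := hS _ _
            rw [happly i, hv', real_inner_smul_left, real_inner_smul_right] at h1
            exact h1
          have : ⟪b i, v⟫ = 0 := by
            by_contra hne
            exact hine (mul_right_cancel₀ hne this)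
          rw [this, zero_smul]
        rw [← hexp]
        rw [← Finset.sum_subset (Finset.subset_univ s) (fun i _ hi => hzero i hi)]
        apply Submodule.sum_mem
        intro i hi
        exact Submodule.smul_mem _ _ (Submodule.subset_span ⟨⟨i, hi⟩, rfl⟩)
      · rw [Submodule.span_le]
        rintro _ ⟨⟨i, hi⟩, rfl⟩
        exact hbmem i hi
    have hli : LinearIndependent ℝ (fun i : s => b i) := by
      have : LinearIndependent ℝ (fun i : Fin n => b i) := by
        have := b.toBasis.linearIndependent
        rwa [OrthonormalBasis.coe_toBasis] at this
      exact this.comp Subtype.val Subtype.val_injective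
    have hfr : finrank ℝ E = s.card := by
      rw [hspan, finrank_span_eq_card hli, Fintype.card_coe]
    -- `E` is `J`-invariant, hence even-dimensional
    have hJE : ∀ v ∈ E, J v ∈ E := by
      intro v hv
      rw [hE, Module.End.mem_eigenspace_iff] at hv ⊢
      show S (J v) = r • J v
      rw [hSJ v]
      show J (S v) = r • J v
      rw [show S v = r • v from hv, map_smul]
    set g : E →ₗ[ℝ] E := (J.toLinearMap).restrict hJE with hg
    have hgg : ∀ v : E, g (g v) = -v := by
      intro v
      apply Subtype.ext
      show J (J (v : W)) = -(v : W)
      exact hJ v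
    have heven : Even (finrank ℝ E) := even_finrank_of_sq_eq_neg_one g hgg
    rwa [hfr] at heven
  -- write `M = 2 • t`, so the charpoly is a square
  obtain ⟨t, ht⟩ := Multiset.exists_smul_of_dvd_count M
    (fun a _ => (hcount a).two_dvd)
  set F : ℝ[X] := (t.map (fun r => X - C r)).prod with hF
  have hsq : S.charpoly = F ^ 2 := by
    rw [hchar, ht, Multiset.map_nsmul, Multiset.prod_nsmul]
  have hFmonic : F.Monic :=
    monic_multiset_prod_of_monic t _ (fun r _ => monic_X_sub_C r)
  have hFdeg : n = 2 * F.natDegree := by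
    have := S.charpoly_natDegree
    rw [hsq, natDegree_pow] at this
    omega
  -- `F` divides the gcd
  have hdvd1 : F ∣ S.charpoly := by rw [hsq]; exact dvd_pow_self F two_ne_zero
  have hdvd2 : F ∣ derivative S.charpoly := by
    rw [hsq, derivative_pow, pow_one]
    exact dvd_mul_of_dvd_left (dvd_mul_left F (C 2)) _
  have hdvd : F ∣ EuclideanDomain.gcd S.charpoly (derivative S.charpoly) :=
    EuclideanDomain.dvd_gcd hdvd1 hdvd2
  have hgne : EuclideanDomain.gcd S.charpoly (derivative S.charpoly) ≠ 0 := by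
    intro h
    rw [EuclideanDomain.gcd_eq_zero_iff] at h
    exact (S.charpoly_monic.ne_zero) h.1
  have := Polynomial.natDegree_le_of_dvd hdvd hgne
  omega
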